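/- If f₀ is an extremal function for the p-modulus mod_p(F) with mod_p(F) > 0, and S ⊆ Λ is a measurable subfamily with mod_p(S) = 0, then μ(π⁻¹(S)) = 0. -/

import Mathlib

open MeasureTheory ENNReal

/-- `f` is admissible for the subfamily `S ⊆ Λ` of leaves: `f` is a nonnegative measurable
function in `L^p(μ)` whose integral over the leaf `ν l` is at least `1` for
`π_*μ`-almost every `l ∈ S`. -/
def IsAdmissible {X Λ : Type*} [MeasurableSpace X] [MeasurableSpace Λ]
    (μ : MeasureTheory.Measure X) (ν : Λ → MeasureTheory.Measure X) (π : X → Λ) (p : ℝ)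
    (S : Set Λ) (f : X → ℝ) : Prop :=
  Measurable f ∧ (∀ x, 0 ≤ f x) ∧ MemLp f (ENNReal.ofReal p) μ ∧
    ∀ᵐ l ∂(μ.map π), l ∈ S → 1 ≤ ∫⁻ x, ENNReal.ofReal (f x) ∂(ν l)

/-- The `p`-modulus of the subfamily `S ⊆ Λ` of leaves: the infimum of the `L^p(μ)`-norms
of functions admissible for `S` (equal to `∞` when no admissible function exists). -/
noncomputable def pModulus {X Λ : Type*} [MeasurableSpace X] [MeasurableSpace Λ]
    (μ : MeasureTheory.Measure X) (ν : Λ → MeasureTheory.Measure X) (π : X → Λ) (p : ℝ)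
    (S : Set Λ) : ℝ≥0∞ :=
  ⨅ (f : X → ℝ) (_ : IsAdmissible μ ν π p S f), eLpNorm f (ENNReal.ofReal p) μ

/-- `f₀` is an extremal function for the `p`-modulus of the foliation (the whole family `Λ`):
it is admissible for `Λ` and its `L^p(μ)`-norm realizes `mod_p(F)`. -/
def IsExtremal {X Λ : Type*} [MeasurableSpace X] [MeasurableSpace Λ]
    (μ : MeasureTheory.Measure X) (ν : Λ → MeasureTheory.Measure X) (π : X → Λ) (p : ℝ)
    (f₀ : X → ℝ) : Prop :=
  IsAdmissible μ ν π p Set.univ f₀ ∧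
    eLpNorm f₀ (ENNReal.ofReal p) μ = pModulus μ ν π p Set.univ

/-!
Given `g` admissible for `S` with `‖g‖_p < ε`, the function `f₀` cut off over `π⁻¹(S)` plus `g`
is admissible for all of `Λ`, since `ν_λ` lives on the fibre `π⁻¹(λ)` and only leaves in `S`
lose mass. Extremality then says that cutting `f₀` off over `π⁻¹(S)` does not decrease its
`L^p` norm, so `f₀ = 0` `μ`-a.e. on `π⁻¹(S)`. By (H), `f₀` then vanishes `ν_λ`-a.e. for
`π_*μ`-a.e. `λ ∈ S`, which is incompatible with `∫ f₀ dν_λ ≥ 1` unless `π_*μ(S) = 0`.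
-/

theorem ae_restrict_eq_zero_of_eLpNorm_le_eLpNorm_indicator_compl {X E : Type*}
    [MeasurableSpace X] [NormedAddCommGroup E] {μ : Measure X} {q : ℝ≥0∞} {f : X → E}
    {T : Set X} (hf : MemLp f q μ) (hq0 : q ≠ 0) (hqtop : q ≠ ∞) (hT : MeasurableSet T)
    (h : eLpNorm f q μ ≤ eLpNorm (Tᶜ.indicator f) q μ) : f =ᵐ[μ.restrict T] 0 := by
  have hr : 0 < q.toReal := ENNReal.toReal_pos hq0 hqtop
  have hle : ∫⁻ x, ‖f x‖ₑ ^ q.toReal ∂μ ≤ ∫⁻ x in Tᶜ, ‖f x‖ₑ ^ q.toReal ∂μ := by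
    rwa [eLpNorm_indicator_eq_eLpNorm_restrict hT.compl,
      eLpNorm_eq_lintegral_rpow_enorm_toReal hq0 hqtop,
      eLpNorm_eq_lintegral_rpow_enorm_toReal hq0 hqtop,
      ENNReal.rpow_le_rpow_iff (by positivity)] at h
  have hfin : ∫⁻ x in Tᶜ, ‖f x‖ₑ ^ q.toReal ∂μ ≠ ∞ :=
    ((setLIntegral_le_lintegral _ _).trans_lt
      (lintegral_rpow_enorm_lt_top_of_eLpNorm_lt_top hq0 hqtop hf.2)).ne
  have hT0 : ∫⁻ x in T, ‖f x‖ₑ ^ q.toReal ∂μ = 0 := by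
    refine nonpos_iff_eq_zero.1 (ENNReal.le_of_add_le_add_right hfin ?_)
    rwa [zero_add, lintegral_add_compl _ hT]
  rw [← eLpNorm_eq_zero_iff hf.1.restrict hq0, eLpNorm_eq_lintegral_rpow_enorm_toReal hq0 hqtop,
    hT0, ENNReal.zero_rpow_of_pos (by positivity)]

section Foliation

variable {X Λ : Type*} [MeasurableSpace X] [MeasurableSpace Λ] {μ : Measure X}
  {ν : Λ → Measure X} {π : X → Λ} {p : ℝ} {S S' : Set Λ} {f g : X → ℝ}

theorem pModulus_le (hf : IsAdmissible μ ν π p S f) :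
    pModulus μ ν π p S ≤ eLpNorm f (ENNReal.ofReal p) μ :=
  iInf₂_le f hf

theorem exists_isAdmissible_eLpNorm_lt {c : ℝ≥0∞} (h : pModulus μ ν π p S < c) :
    ∃ g, IsAdmissible μ ν π p S g ∧ eLpNorm g (ENNReal.ofReal p) μ < c := by
  simpa only [pModulus, iInf_lt_iff, exists_prop] using h

theorem IsAdmissible.mono (hf : IsAdmissible μ ν π p S f) (hS' : S' ⊆ S) :
    IsAdmissible μ ν π p S' f :=
  ⟨hf.1, hf.2.1, hf.2.2.1, hf.2.2.2.mono fun _ h hl => h (hS' hl)⟩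

theorem IsAdmissible.indicator_preimage_compl_add (hK : ∀ l : Λ, ν l {x | π x ≠ l} = 0)
    (hπ : Measurable π) (hS : MeasurableSet S) (hf : IsAdmissible μ ν π p S' f)
    (hg : IsAdmissible μ ν π p S g) :
    IsAdmissible μ ν π p S' ((π ⁻¹' S)ᶜ.indicator f + g) := by
  obtain ⟨hfm, hf0, hfLp, hf1⟩ := hf
  obtain ⟨hgm, hg0, hgLp, hg1⟩ := hg
  have hT : MeasurableSet (π ⁻¹' S)ᶜ := (hπ hS).compl
  have hind0 : ∀ x, 0 ≤ (π ⁻¹' S)ᶜ.indicator f x := Set.indicator_nonneg fun x _ => hf0 x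
  refine ⟨(hfm.indicator hT).add hgm, fun x => add_nonneg (hind0 x) (hg0 x),
    (hfLp.indicator hT).add hgLp, ?_⟩
  filter_upwards [hf1, hg1] with l hfl hgl hlS'
  by_cases hlS : l ∈ S
  · refine (hgl hlS).trans (lintegral_mono fun x => ENNReal.ofReal_le_ofReal ?_)
    exact le_add_of_nonneg_left (hind0 x)
  · have hfibre : ∀ᵐ x ∂ν l, π x = l := by simpa [ae_iff] using hK l
    refine (hfl hlS').trans (lintegral_mono_ae ?_)
    filter_upwards [hfibre] with x hx
    have hxT : x ∈ (π ⁻¹' S)ᶜ := by simpa [hx] using hlS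
    rw [Pi.add_apply, Set.indicator_of_mem hxT]
    exact ENNReal.ofReal_le_ofReal (le_add_of_nonneg_right (hg0 x))

theorem IsAdmissible.measure_preimage_eq_zero (hK : ∀ l : Λ, ν l {x | π x ≠ l} = 0)
    (hH : ∀ N : Set X, MeasurableSet N → μ N = 0 → ∀ᵐ l ∂(μ.map π), ν l N = 0)
    (hπ : Measurable π) (hS : MeasurableSet S) (hf : IsAdmissible μ ν π p S f)
    (hzero : f =ᵐ[μ.restrict (π ⁻¹' S)] 0) : μ (π ⁻¹' S) = 0 := by
  set N := π ⁻¹' S ∩ {x | f x ≠ 0}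
  have hNm : MeasurableSet N := (hπ hS).inter (hf.1 (measurableSet_singleton 0)).compl
  have hN : μ N = 0 := by
    rw [Filter.EventuallyEq, ae_restrict_iff' (hπ hS)] at hzero
    exact measure_eq_zero_iff_ae_notMem.2 (hzero.mono fun x hxf hx => hx.2 (hxf hx.1))
  rw [← Measure.map_apply hπ hS, measure_eq_zero_iff_ae_notMem]
  filter_upwards [hH N hNm hN, hf.2.2.2] with l hlN hl1 hlS
  have hfibre : ∀ᵐ x ∂ν l, π x = l := by simpa [ae_iff] using hK l
  have hvanish : ∫⁻ x, ENNReal.ofReal (f x) ∂ν l = 0 := by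
    refine (lintegral_congr_ae ?_).trans lintegral_zero
    filter_upwards [hfibre, measure_eq_zero_iff_ae_notMem.1 hlN] with x hx hxN
    have hfx : f x = 0 := by_contra fun hfx => hxN ⟨by simpa [hx] using hlS, hfx⟩
    simp [hfx]
  simpa [hvanish] using hl1 hlS

theorem IsExtremal.eLpNorm_le_eLpNorm_indicator_compl (hK : ∀ l : Λ, ν l {x | π x ≠ l} = 0)
    (hπ : Measurable π) (hp : 1 ≤ p) (hf : IsExtremal μ ν π p f) (hS : MeasurableSet S)
    (hmod : pModulus μ ν π p S = 0) :
    eLpNorm f (ENNReal.ofReal p) μ ≤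
      eLpNorm ((π ⁻¹' S)ᶜ.indicator f) (ENNReal.ofReal p) μ := by
  refine ENNReal.le_of_forall_pos_le_add fun ε hε _ => ?_
  obtain ⟨g, hg, hgε⟩ := exists_isAdmissible_eLpNorm_lt (hmod.trans_lt (ENNReal.coe_pos.2 hε))
  have hcut := hf.1.2.2.1.1.indicator (hπ hS).compl
  calc eLpNorm f (ENNReal.ofReal p) μ = pModulus μ ν π p Set.univ := hf.2
    _ ≤ eLpNorm ((π ⁻¹' S)ᶜ.indicator f + g) (ENNReal.ofReal p) μ :=
      pModulus_le (hf.1.indicator_preimage_compl_add hK hπ hS hg)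
    _ ≤ eLpNorm ((π ⁻¹' S)ᶜ.indicator f) (ENNReal.ofReal p) μ +
        eLpNorm g (ENNReal.ofReal p) μ :=
      eLpNorm_add_le hcut hg.2.2.1.1 (ENNReal.one_le_ofReal.2 hp)
    _ ≤ eLpNorm ((π ⁻¹' S)ᶜ.indicator f) (ENNReal.ofReal p) μ + ε := by gcongr

end Foliation

theorem statement11_general {X Λ : Type*} [MeasurableSpace X] [MeasurableSpace Λ]
    (μ : MeasureTheory.Measure X) (ν : Λ → MeasureTheory.Measure X)
    (π : X → Λ) (hπ : Measurable π)
    (hK : ∀ l : Λ, ν l {x | π x ≠ l} = 0)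
    (hH : ∀ N : Set X, MeasurableSet N → μ N = 0 → ∀ᵐ l ∂(μ.map π), ν l N = 0)
    (p : ℝ) (hp : 1 < p)
    (f₀ : X → ℝ) (hf₀ : IsExtremal μ ν π p f₀)
    (S : Set Λ) (hS : MeasurableSet S) (hmod : pModulus μ ν π p S = 0) :
    μ (π ⁻¹' S) = 0 := by
  have hp0 : ENNReal.ofReal p ≠ 0 := ENNReal.ofReal_ne_zero_iff.2 (zero_lt_one.trans hp)
  have hnorm := hf₀.eLpNorm_le_eLpNorm_indicator_compl hK hπ hp.le hS hmod
  have hzero : f₀ =ᵐ[μ.restrict (π ⁻¹' S)] 0 :=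
    ae_restrict_eq_zero_of_eLpNorm_le_eLpNorm_indicator_compl hf₀.1.2.2.1 hp0
      ENNReal.ofReal_ne_top (hπ hS) hnorm
  exact (hf₀.1.mono (Set.subset_univ S)).measure_preimage_eq_zero hK hH hπ hS hzero

/-- if f₀ is an extremal function for the p-modulus with mod_p(F) > 0, then
every measurable subfamily S ⊆ Λ with mod_p(S) = 0 satisfies μ(π⁻¹(S)) = 0. -/
theorem statement11 {X Λ : Type*} [MeasurableSpace X] [MeasurableSpace Λ]
    (μ : MeasureTheory.Measure X) [SigmaFinite μ] (ν : Λ → MeasureTheory.Measure X)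
    (π : X → Λ) (hπ : Measurable π) (hν : Measurable ν)
    (hK : ∀ l : Λ, ν l {x | π x ≠ l} = 0)
    (hH : ∀ N : Set X, MeasurableSet N → μ N = 0 → ∀ᵐ l ∂(μ.map π), ν l N = 0)
    (p : ℝ) (hp : 1 < p)
    (f₀ : X → ℝ) (hf₀ : IsExtremal μ ν π p f₀)
    (hpos : 0 < pModulus μ ν π p Set.univ)
    (S : Set Λ) (hS : MeasurableSet S) (hmod : pModulus μ ν π p S = 0) :
    μ (π ⁻¹' S) = 0 :=
  statement11_general μ ν π hπ hK hH p hp f₀ hf₀ S hS hmod
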